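/- Y-seed mutation is an involution on Y-seeds satisfying sign coherence: if (c', B') = μ_k(c, B) where each c-vector c_i and c'_i is a nonzero integer vector with entries all nonnegative or all nonpositive, then μ_k(c', B') = (c, B). -/

import Mathlib

open Finset

/-- Positive part `[b]_+ = max(b,0)` of an integer. -/
def pp (b : ℤ) : ℤ := max b 0

/-- Matrix mutation `μ_k` of a skew-symmetrizable integer matrix. -/
def mutate {n : ℕ} (B : Matrix (Fin n) (Fin n) ℤ) (k : Fin n) :
    Matrix (Fin n) (Fin n) ℤ := fun i j =>
  if i = k ∨ j = k then -B i j
  else B i j + pp (B i k) * pp (B k j) - pp (-B i k) * pp (-B k j)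

/-- Sign of a sign-coherent vector: `+1` if all entries are nonnegative, else `-1`. -/
def sgnVec {n : ℕ} (v : Fin n → ℤ) : ℤ := if ∀ l, 0 ≤ v l then 1 else -1

/-- Sign coherence: each c-vector is nonzero with all entries nonnegative or all nonpositive. -/
def SignCoherent {n : ℕ} (c : Fin n → Fin n → ℤ) : Prop :=
  ∀ i, c i ≠ 0 ∧ ((∀ l, 0 ≤ c i l) ∨ (∀ l, c i l ≤ 0))

/-- Mutation of the tuple of c-vectors. -/
def cMut {n : ℕ} (c : Fin n → Fin n → ℤ) (B : Matrix (Fin n) (Fin n) ℤ) (k : Fin n) :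
    Fin n → Fin n → ℤ := fun i =>
  if i = k then -c k else fun l => c i l + pp (sgnVec (c k) * B k i) * c k l

/-- One Y-seed mutation step. -/
def SeedStep {n : ℕ} (s t : (Fin n → Fin n → ℤ) × Matrix (Fin n) (Fin n) ℤ) : Prop :=
  ∃ k, t = (cMut s.1 s.2 k, mutate s.2 k)

/-- A Y-seed is reachable from another by a sequence of Y-seed mutations. -/
def SeedReachable {n : ℕ} (s t : (Fin n → Fin n → ℤ) × Matrix (Fin n) (Fin n) ℤ) : Prop :=
  Relation.ReflTransGen SeedStep s t

/-- The initial c-vectors: the standard basis. -/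
def initialC (n : ℕ) : Fin n → Fin n → ℤ := fun i => Pi.single i 1

/-- The diagram `Γ(B)` (edge `i → j` iff `B j i > 0`) has no oriented cycles. -/
def DiagramAcyclic {n : ℕ} (B : Matrix (Fin n) (Fin n) ℤ) : Prop :=
  ∀ i, ¬ Relation.TransGen (fun p q : Fin n => 0 < B q p) i i

/-- The generalized Cartan matrix associated to an acyclic skew-symmetrizable matrix. -/
def cartanOf {n : ℕ} (B : Matrix (Fin n) (Fin n) ℤ) : Matrix (Fin n) (Fin n) ℤ :=
  fun i j => if i = j then 2 else -|B i j|

/-- The invariant symmetric bilinear form `(x,y) = xᵀ (D A₀) y`. -/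
def form {n : ℕ} (d : Fin n → ℤ) (A0 : Matrix (Fin n) (Fin n) ℤ) (x y : Fin n → ℤ) : ℤ :=
  ∑ p, ∑ q, x p * (d p * A0 p q) * y q

/-- An oriented cycle `p 0 → p 1 → ⋯ → p m = p 0` in the diagram `Γ(B)`. -/
def IsOrientedCycle {n : ℕ} (B : Matrix (Fin n) (Fin n) ℤ) (p : ℕ → Fin n) (m : ℕ) : Prop :=
  3 ≤ m ∧ p m = p 0 ∧ (∀ t < m, ∀ u < m, p t = p u → t = u) ∧
    ∀ t < m, 0 < B (p (t + 1)) (p t)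

/-- A non-oriented cycle in the diagram `Γ(B)`. -/
def IsNonOrientedCycle {n : ℕ} (B : Matrix (Fin n) (Fin n) ℤ) (p : ℕ → Fin n) (m : ℕ) : Prop :=
  3 ≤ m ∧ p m = p 0 ∧ (∀ t < m, ∀ u < m, p t = p u → t = u) ∧
    (∀ t < m, B (p t) (p (t + 1)) ≠ 0) ∧
    ¬(∀ t < m, 0 < B (p (t + 1)) (p t)) ∧ ¬(∀ t < m, 0 < B (p t) (p (t + 1)))

/-- The number of edges `{p t, p (t+1)}` of a cycle/path with `A (p t) (p (t+1)) > 0`. -/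
def posEdgeCount {n : ℕ} (A : Matrix (Fin n) (Fin n) ℤ) (p : ℕ → Fin n) (m : ℕ) : ℕ :=
  ((Finset.range m).filter fun t => 0 < A (p t) (p (t + 1))).card

/-- Admissibility of a quasi-Cartan companion `A` of `B`. -/
def Admissible {n : ℕ} (B A : Matrix (Fin n) (Fin n) ℤ) : Prop :=
  (∀ p m, IsOrientedCycle B p m → Odd (posEdgeCount A p m)) ∧
  (∀ p m, IsNonOrientedCycle B p m → Even (posEdgeCount A p m))

/-- The `ε`-mutation `μ_k^ε(A)` of a quasi-Cartan companion. -/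
def cmpMut {n : ℕ} (B A : Matrix (Fin n) (Fin n) ℤ) (k : Fin n) (ε : ℤ) :
    Matrix (Fin n) (Fin n) ℤ := fun i j =>
  if i = k ∧ j = k then 2
  else if j = k then ε * Int.sign (B k i) * A i k
  else if i = k then ε * Int.sign (B k j) * A k j
  else A i j - Int.sign (A i k * A k j) * pp (B i k * B k j)

/-- The simple reflection `s_i` on the root lattice: `s_i(α_j) = α_j - A_{ij} α_i`. -/
def srefl {n : ℕ} (A : Matrix (Fin n) (Fin n) ℤ) (i : Fin n) (x : Fin n → ℤ) :
    Fin n → ℤ := fun l => x l - (if l = i then ∑ j, A i j * x j else 0)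

/-- A real root: image of a simple root under a product of simple reflections. -/
def IsRealRoot {n : ℕ} (A : Matrix (Fin n) (Fin n) ℤ) (α : Fin n → ℤ) : Prop :=
  ∃ (w : List (Fin n)) (i : Fin n), α = w.foldr (srefl A) (Pi.single i 1)

/-! Under `μ_k` both `c_k` and the row `B_{k•}` change sign, so the coefficient
`[sgn(c_k) B_{ki}]_+` is the same in the two mutations and the corrections cancel; for the
matrix, the two correction terms of `μ_k` trade places when `B_{ik}` and `B_{kj}` change sign. -/

variable {n : ℕ}

theorem mutate_self_left (B : Matrix (Fin n) (Fin n) ℤ) (k j : Fin n) :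
    mutate B k k j = -B k j := by
  simp [mutate]

theorem mutate_self_right (B : Matrix (Fin n) (Fin n) ℤ) (i k : Fin n) :
    mutate B k i k = -B i k := by
  simp [mutate]

theorem mutate_of_ne (B : Matrix (Fin n) (Fin n) ℤ) {i j k : Fin n} (hik : i ≠ k) (hjk : j ≠ k) :
    mutate B k i j = B i j + pp (B i k) * pp (B k j) - pp (-B i k) * pp (-B k j) := by
  simp [mutate, hik, hjk]

theorem mutate_mutate (B : Matrix (Fin n) (Fin n) ℤ) (k : Fin n) :
    mutate (mutate B k) k = B := by
  ext i j
  by_cases hij : i = k ∨ j = k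
  · simp [mutate, hij]
  · push Not at hij
    rw [mutate_of_ne _ hij.1 hij.2, mutate_of_ne _ hij.1 hij.2, mutate_self_left,
      mutate_self_right, neg_neg, neg_neg]
    ring

theorem sgnVec_neg {v : Fin n → ℤ} (hv : v ≠ 0) (hsc : (∀ l, 0 ≤ v l) ∨ ∀ l, v l ≤ 0) :
    sgnVec (-v) = -sgnVec v := by
  have not_both : ¬((∀ l, 0 ≤ v l) ∧ ∀ l, v l ≤ 0) := fun ⟨h₀, h₁⟩ =>
    hv (funext fun l => le_antisymm (h₁ l) (h₀ l))
  have neg_nonneg_iff : (∀ l, 0 ≤ (-v) l) ↔ ∀ l, v l ≤ 0 := by simp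
  rcases hsc with h | h
  · rw [sgnVec, sgnVec, if_pos h, if_neg (neg_nonneg_iff.not.mpr fun h' => not_both ⟨h, h'⟩)]
  · rw [sgnVec, sgnVec, if_pos (neg_nonneg_iff.mpr h), if_neg fun h' => not_both ⟨h', h⟩]
    rfl

theorem cMut_self (c : Fin n → Fin n → ℤ) (B : Matrix (Fin n) (Fin n) ℤ) (k : Fin n) :
    cMut c B k k = -c k := by
  simp [cMut]

theorem cMut_of_ne (c : Fin n → Fin n → ℤ) (B : Matrix (Fin n) (Fin n) ℤ) {i k : Fin n}
    (hik : i ≠ k) : cMut c B k i = fun l => c i l + pp (sgnVec (c k) * B k i) * c k l := by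
  simp [cMut, hik]

theorem cMut_cMut {c : Fin n → Fin n → ℤ} (B : Matrix (Fin n) (Fin n) ℤ) {k : Fin n}
    (hk : c k ≠ 0) (hsc : (∀ l, 0 ≤ c k l) ∨ ∀ l, c k l ≤ 0) :
    cMut (cMut c B k) (mutate B k) k = c := by
  funext i
  by_cases hik : i = k
  · subst hik
    simp only [cMut_self, neg_neg]
  · have sign_flip : sgnVec (cMut c B k k) * mutate B k k i = sgnVec (c k) * B k i := by
      rw [cMut_self, sgnVec_neg hk hsc, mutate_self_left, neg_mul_neg]
    funext l
    rw [cMut_of_ne _ _ hik, sign_flip, cMut_of_ne _ _ hik, cMut_self]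
    simp only [Pi.neg_apply]
    ring

theorem y_seed_mutation_involutive_general {n : ℕ} (B : Matrix (Fin n) (Fin n) ℤ)
    (c : Fin n → Fin n → ℤ) (hc : SignCoherent c) (k : Fin n) :
    cMut (cMut c B k) (mutate B k) k = c ∧ mutate (mutate B k) k = B :=
  ⟨cMut_cMut B (hc k).1 (hc k).2, mutate_mutate B k⟩

/-- Y-seed mutation is an involution on sign-coherent Y-seeds. -/
theorem y_seed_mutation_involutive {n : ℕ} (B : Matrix (Fin n) (Fin n) ℤ)
    (hB : ∃ d : Fin n → ℤ, (∀ i, 0 < d i) ∧ ∀ i j, d i * B i j = -(d j * B j i))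
    (c : Fin n → Fin n → ℤ) (hc : SignCoherent c) (k : Fin n)
    (hc' : SignCoherent (cMut c B k)) :
    cMut (cMut c B k) (mutate B k) k = c ∧ mutate (mutate B k) k = B :=
  y_seed_mutation_involutive_general B c hc k
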